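/- Let H be a bialgebra over a field k and r ∈ H⊗H an element satisfying (I⊗Δ)(r) = r₁₂ + r₁₃ and (Δ⊗I)(r) = r₁₃ + r₂₃. Then r lies in the image of Prim(H)⊗Prim(H) in H⊗H, where Prim(H) = {x ∈ H : Δ(x) = x⊗1 + 1⊗x} is the subspace of primitive elements. -/

import Mathlib

/-!
Write `ι₁ x = x ⊗ 1` and `ι₂ x = 1 ⊗ x`. Then `(I ⊗ ι₁) r = r₁₂`, `(I ⊗ ι₂) r = r₁₃`,
`(ι₁ ⊗ I) r = r₁₃` and `(ι₂ ⊗ I) r = r₂₃`, so the two triangle equations say that `r` is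
killed by `I ⊗ δ` and by `δ ⊗ I`, where `δ = Δ - ι₁ - ι₂` has kernel `Prim(H)`. Over a field
tensoring is exact, so `r` lies in `H ⊗ Prim(H)` and in `Prim(H) ⊗ H`; applying `π ⊗ π` for a
projection `π` of `H` onto `Prim(H)` then fixes `r`, which therefore lies in
`Prim(H) ⊗ Prim(H)`.
-/

open scoped TensorProduct

noncomputable section

variable (K H : Type*) [Field K] [Ring H] [Bialgebra K H]

/-- The comultiplication of the bialgebra `H`. -/
def cm : H →ₗ[K] H ⊗[K] H := Coalgebra.comul

/-- The counit of the bialgebra `H`. -/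
def cu : H →ₗ[K] K := Coalgebra.counit

/-- A twisted derivation of the bialgebra `H` is a pair `(d, φ)` where `d` is a
`K`-algebra derivation of `H` and `φ ∈ H ⊗ H`, such that
`(d⊗I + I⊗d)(Δ(x)) − Δ(d(x)) = [φ, Δ(x)]` for all `x`,
`1⊗φ + (I⊗Δ)(φ) = φ⊗1 + (Δ⊗I)(φ)` (co-Hochschild 2-cocycle condition), and
`ε∘d = 0`, `(ε⊗I)(φ) = 0 = (I⊗ε)(φ)`. -/
structure IsTwistedDerivation (d : H →ₗ[K] H) (φ : H ⊗[K] H) : Prop where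
  leibniz : ∀ x y : H, d (x * y) = d x * y + x * d y
  conj : ∀ x : H,
    (LinearMap.rTensor H d + LinearMap.lTensor H d) (cm K H x) - cm K H (d x)
      = φ * cm K H x - cm K H x * φ
  cocycle : (1 : H) ⊗ₜ[K] φ + LinearMap.lTensor H (cm K H) φ
      = TensorProduct.assoc K H H H (φ ⊗ₜ[K] (1 : H) + LinearMap.rTensor H (cm K H) φ)
  counit_comp : ∀ x : H, cu K H (d x) = 0
  counit_left : TensorProduct.lid K H (LinearMap.rTensor H (cu K H) φ) = 0
  counit_right : TensorProduct.rid K H (LinearMap.lTensor H (cu K H) φ) = 0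

/-- The inner derivation `[a, −] : x ↦ ax − xa`. -/
def innerDer (a : H) : H →ₗ[K] H := LinearMap.mulLeft K a - LinearMap.mulRight K a

/-- The coboundary twist `a⊗1 + 1⊗a − Δ(a)`. -/
def bdryTwist (a : H) : H ⊗[K] H := a ⊗ₜ[K] (1 : H) + (1 : H) ⊗ₜ[K] a - cm K H a

/-- For `S = Σ aᵢ⊗bᵢ ∈ H ⊗ H`, the element `S₁₂ = Σ aᵢ⊗bᵢ⊗1` of `H ⊗ (H ⊗ H)`. -/
def s12 (S : H ⊗[K] H) : H ⊗[K] (H ⊗[K] H) :=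
  TensorProduct.assoc K H H H (S ⊗ₜ[K] (1 : H))

/-- For `S = Σ aᵢ⊗bᵢ ∈ H ⊗ H`, the element `S₂₃ = Σ 1⊗aᵢ⊗bᵢ` of `H ⊗ (H ⊗ H)`. -/
def s23 (S : H ⊗[K] H) : H ⊗[K] (H ⊗[K] H) := (1 : H) ⊗ₜ[K] S

/-- For `S = Σ aᵢ⊗bᵢ ∈ H ⊗ H`, the element `S₁₃ = Σ aᵢ⊗1⊗bᵢ` of `H ⊗ (H ⊗ H)`. -/
def s13 (S : H ⊗[K] H) : H ⊗[K] (H ⊗[K] H) :=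
  LinearMap.lTensor H (TensorProduct.comm K H H).toLinearMap (s12 K H S)

/-- A universal R-matrix on the bialgebra `H`: an invertible `R ∈ H ⊗ H` such that
`R·τ(Δ(x)) = Δ(x)·R` for all `x`, `(I⊗Δ)(R) = R₂₃R₁₃` and `(Δ⊗I)(R) = R₁₂R₁₃`. -/
structure IsRMatrix (R : H ⊗[K] H) : Prop where
  isUnit : IsUnit R
  conj : ∀ x : H, R * TensorProduct.comm K H H (cm K H x) = cm K H x * R
  hexagon_left : LinearMap.lTensor H (cm K H) R = s23 K H R * s13 K H R
  hexagon_right :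
    TensorProduct.assoc K H H H (LinearMap.rTensor H (cm K H) R) = s12 K H R * s13 K H R

/-- The subspace of primitive elements `Prim(H) = {x | Δ(x) = x⊗1 + 1⊗x}`,
as the kernel of the linear map `x ↦ Δ(x) − (x⊗1 + 1⊗x)`. -/
def primitives : Submodule K H :=
  LinearMap.ker (cm K H - ((TensorProduct.mk K H H).flip (1 : H) + TensorProduct.mk K H H 1))

open TensorProduct LinearMap

section TensorSubspaces

variable {k M N : Type*} [Field k] [AddCommGroup M] [Module k M] [AddCommGroup N] [Module k N]

theorem mem_range_map_subtype_of_mem_range_rTensor_of_mem_range_lTensor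
    (P : Submodule k M) (Q : Submodule k N) {r : M ⊗[k] N}
    (hP : r ∈ range (rTensor N P.subtype)) (hQ : r ∈ range (lTensor M Q.subtype)) :
    r ∈ range (map P.subtype Q.subtype) := by
  obtain ⟨P', hP'⟩ := P.exists_isCompl
  obtain ⟨Q', hQ'⟩ := Q.exists_isCompl
  set p := P.projectionOnto P' hP'
  set q := Q.projectionOnto Q' hQ'
  have hp : (P.subtype ∘ₗ p) ∘ₗ P.subtype = P.subtype := by
    ext x; simp [p, Submodule.projectionOnto_apply_left hP']
  have hq : (Q.subtype ∘ₗ q) ∘ₗ Q.subtype = Q.subtype := by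
    ext x; simp [q, Submodule.projectionOnto_apply_left hQ']
  have hrP : rTensor N (P.subtype ∘ₗ p) r = r := by
    obtain ⟨s, rfl⟩ := hP
    rw [← comp_apply, ← rTensor_comp, hp]
  have hrQ : lTensor M (Q.subtype ∘ₗ q) r = r := by
    obtain ⟨t, rfl⟩ := hQ
    rw [← comp_apply, ← lTensor_comp, hq]
  refine ⟨map p q r, ?_⟩
  rw [← comp_apply, ← map_comp, ← lTensor_comp_rTensor, comp_apply, hrP, hrQ]

end TensorSubspaces

def primDefect : H →ₗ[K] H ⊗[K] H :=
  cm K H - ((TensorProduct.mk K H H).flip (1 : H) + TensorProduct.mk K H H 1)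

theorem lTensor_mk_flip_one (S : H ⊗[K] H) :
    lTensor H ((TensorProduct.mk K H H).flip 1) S = s12 K H S := by
  induction S using TensorProduct.induction_on <;> simp_all [s12, add_tmul]

theorem lTensor_mk_one (S : H ⊗[K] H) :
    lTensor H (TensorProduct.mk K H H 1) S = s13 K H S := by
  induction S using TensorProduct.induction_on <;> simp_all [s13, s12, add_tmul]

theorem assoc_rTensor_mk_flip_one (S : H ⊗[K] H) :
    TensorProduct.assoc K H H H (rTensor H ((TensorProduct.mk K H H).flip 1) S) = s13 K H S := by
  induction S using TensorProduct.induction_on <;> simp_all [s13, s12, add_tmul]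

theorem assoc_rTensor_mk_one (S : H ⊗[K] H) :
    TensorProduct.assoc K H H H (rTensor H (TensorProduct.mk K H H 1) S) = s23 K H S := by
  induction S using TensorProduct.induction_on <;> simp_all [s23, tmul_add]

theorem lTensor_primDefect_eq_zero (r : H ⊗[K] H)
    (h : lTensor H (cm K H) r = s12 K H r + s13 K H r) :
    lTensor H (primDefect K H) r = 0 := by
  simp only [primDefect, lTensor_sub, lTensor_add, LinearMap.sub_apply, LinearMap.add_apply, h,
    lTensor_mk_flip_one, lTensor_mk_one, sub_self]

theorem rTensor_primDefect_eq_zero (r : H ⊗[K] H)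
    (h : TensorProduct.assoc K H H H (rTensor H (cm K H) r) = s13 K H r + s23 K H r) :
    rTensor H (primDefect K H) r = 0 := by
  apply (TensorProduct.assoc K H H H).injective
  simp only [primDefect, rTensor_sub, rTensor_add, LinearMap.sub_apply, LinearMap.add_apply,
    map_sub, map_add, h, assoc_rTensor_mk_flip_one, assoc_rTensor_mk_one, sub_self, map_zero]

theorem classical_rmatrix_primitive (r : H ⊗[K] H)
    (h1 : LinearMap.lTensor H (cm K H) r = s12 K H r + s13 K H r)
    (h2 : TensorProduct.assoc K H H H (LinearMap.rTensor H (cm K H) r)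
      = s13 K H r + s23 K H r) :
    r ∈ LinearMap.range
      (TensorProduct.map (primitives K H).subtype (primitives K H).subtype) := by
  refine mem_range_map_subtype_of_mem_range_rTensor_of_mem_range_lTensor _ _ ?_ ?_
  · exact (Module.Flat.rTensor_exact H (exact_subtype_ker_map (primDefect K H)) r).mp
      (rTensor_primDefect_eq_zero K H r h2)
  · exact (Module.Flat.lTensor_exact H (exact_subtype_ker_map (primDefect K H)) r).mp
      (lTensor_primDefect_eq_zero K H r h1)

end
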